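/- Let b > 1, m > 0, n > 0 be real, q ≥ 0 an integer, z_k := exp(−n(b−1)/(m·b^k)), t := b^{−q}/(b−1), and let p̃(w, β_1,…,β_q) := z_w^{1/(b−1)}·(1−z_w)·∏_{j=1}^q z_{w−j}^{1−β_j}·(1−z_{w−j})^{β_j}. Then (assuming all series converge absolutely) ∑_{w∈ℤ} ∑_{β_1,…,β_q∈{0,1}} p̃(w, β_1,…,β_q) · ( z_w·(1+z_w)·(ln z_w)³/(1−z_w)³ + ∑_{j=1}^q β_j · z_{w−j}·(1+z_{w−j})·(ln z_{w−j})³/(1−z_{w−j})³ ) = ∑_{w∈ℤ} z_w^{1+t}·(1+z_w)·(ln z_w)³/(1−z_w)². -/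

import Mathlib

open Real Finset

/-- z_k = exp(−n(b−1)/(m·b^k)). -/
noncomputable def zf (b m n : ℝ) (k : ℤ) : ℝ :=
  Real.exp (-(n * (b - 1)) / (m * b ^ k))

/-- The simplified register probability mass. -/
noncomputable def ptilde (b m n : ℝ) (q : ℕ) (w : ℤ) (β : Fin q → Fin 2) : ℝ :=
  zf b m n w ^ (1 / (b - 1)) * (1 - zf b m n w) *
    ∏ j : Fin q,
      zf b m n (w - ((j : ℕ) : ℤ) - 1) ^ (1 - (β j : ℕ)) *
        (1 - zf b m n (w - ((j : ℕ) : ℤ) - 1)) ^ ((β j : ℕ))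

/-- z_w·(1+z_w)·(ln z_w)³/(1−z_w)³ + ∑_{j=1}^q β_j·z_{w−j}·(1+z_{w−j})·(ln z_{w−j})³/(1−z_{w−j})³,
which equals −n³·∂³/∂n³ ln p̃. -/
noncomputable def thirdBracket (b m n : ℝ) (q : ℕ) (w : ℤ) (β : Fin q → Fin 2) : ℝ :=
  zf b m n w * (1 + zf b m n w) * Real.log (zf b m n w) ^ 3 / (1 - zf b m n w) ^ 3 +
    ∑ j : Fin q, ((β j : ℕ) : ℝ) *
      (zf b m n (w - ((j : ℕ) : ℤ) - 1) * (1 + zf b m n (w - ((j : ℕ) : ℤ) - 1)) *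
        Real.log (zf b m n (w - ((j : ℕ) : ℤ) - 1)) ^ 3 /
          (1 - zf b m n (w - ((j : ℕ) : ℤ) - 1)) ^ 3)

/-- The "square-denominator" quantity H(w) = z_w(1+z_w)(ln z_w)³/(1−z_w)². -/
noncomputable def Hf (b m n : ℝ) (w : ℤ) : ℝ :=
  zf b m n w * (1 + zf b m n w) * Real.log (zf b m n w) ^ 3 / (1 - zf b m n w) ^ 2

lemma zf_pos (b m n : ℝ) (k : ℤ) : 0 < zf b m n k := Real.exp_pos _

lemma zf_lt_one {b m n : ℝ} (hb : 1 < b) (hm : 0 < m) (hn : 0 < n) (k : ℤ) :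
    zf b m n k < 1 := by
  rw [zf, Real.exp_lt_one_iff]
  apply div_neg_of_neg_of_pos
  · nlinarith
  · positivity

/-- Summing the mass times the bracket over all β. -/
lemma beta_sum {b m n : ℝ} (hb : 1 < b) (hm : 0 < m) (hn : 0 < n) (q : ℕ) (w : ℤ) :
    ∑ β : Fin q → Fin 2, ptilde b m n q w β * thirdBracket b m n q w β
      = zf b m n w ^ (1 / (b - 1)) * Hf b m n w
        + ∑ j : Fin q, zf b m n w ^ (1 / (b - 1)) * (1 - zf b m n w) *
            Hf b m n (w - ((j : ℕ) : ℤ) - 1) := by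
  classical
  set z := zf b m n w with hz
  set r := (1 : ℝ) / (b - 1) with hr
  set Z : Fin q → ℝ := fun j => zf b m n (w - ((j : ℕ) : ℤ) - 1) with hZ
  set P : Fin q → Fin 2 → ℝ :=
    fun j v => Z j ^ (1 - (v : ℕ)) * (1 - Z j) ^ ((v : ℕ)) with hP
  set G : Fin q → ℝ :=
    fun j => Z j * (1 + Z j) * Real.log (Z j) ^ 3 / (1 - Z j) ^ 3 with hG
  have hz1 : z < 1 := zf_lt_one hb hm hn w
  have hz1' : (1 : ℝ) - z ≠ 0 := by linarith [zf_pos b m n w]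
  have hZ1 : ∀ j, (1 : ℝ) - Z j ≠ 0 := fun j => by
    have := zf_lt_one hb hm hn (w - ((j : ℕ) : ℤ) - 1)
    simp only [hZ]; linarith
  -- sum of products of P equals 1
  have hPsum : ∀ i : Fin q, ∑ v : Fin 2, P i v = 1 := by
    intro i
    rw [Fin.sum_univ_two]
    simp [hP]
  have hsum1 : ∑ β : Fin q → Fin 2, ∏ i : Fin q, P i (β i) = 1 := by
    rw [← Fintype.prod_sum]
    exact Finset.prod_eq_one fun i _ => hPsum i
  -- sum of β_j times products of P
  have hsum2 : ∀ j : Fin q,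
      ∑ β : Fin q → Fin 2, ((β j : ℕ) : ℝ) * ∏ i : Fin q, P i (β i)
        = 1 - Z j := by
    intro j
    set Q : Fin q → Fin 2 → ℝ :=
      fun i v => P i v * (if i = j then ((v : ℕ) : ℝ) else 1) with hQ
    have h1 : ∀ β : Fin q → Fin 2,
        ((β j : ℕ) : ℝ) * ∏ i : Fin q, P i (β i) = ∏ i : Fin q, Q i (β i) := by
      intro β
      rw [← Finset.mul_prod_erase Finset.univ (fun i => P i (β i)) (Finset.mem_univ j),
          ← Finset.mul_prod_erase Finset.univ (fun i => Q i (β i)) (Finset.mem_univ j)]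
      have he : ∀ i ∈ Finset.univ.erase j, Q i (β i) = P i (β i) := by
        intro i hi
        have hij : i ≠ j := Finset.ne_of_mem_erase hi
        simp [hQ, hij]
      rw [Finset.prod_congr rfl he]
      simp only [hQ, eq_self_iff_true, if_true]
      ring
    rw [Finset.sum_congr rfl fun β _ => h1 β]
    rw [← Fintype.prod_sum Q]
    rw [Finset.prod_eq_single j]
    · rw [Fin.sum_univ_two]
      simp [hQ, hP]
    · intro i _ hij
      rw [Fin.sum_univ_two]
      simp only [hQ, if_neg hij, mul_one]
      rw [← Fin.sum_univ_two (fun v => P i v)]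
      exact hPsum i
    · simp
  have hpt : ∀ β : Fin q → Fin 2,
      ptilde b m n q w β = z ^ r * (1 - z) * ∏ i : Fin q, P i (β i) := fun β => rfl
  have hbr : ∀ β : Fin q → Fin 2,
      thirdBracket b m n q w β
        = z * (1 + z) * Real.log z ^ 3 / (1 - z) ^ 3
          + ∑ j : Fin q, ((β j : ℕ) : ℝ) * G j := fun β => rfl
  have hexp : ∀ β : Fin q → Fin 2,
      ptilde b m n q w β * thirdBracket b m n q w β
        = z ^ r * (1 - z) * (z * (1 + z) * Real.log z ^ 3 / (1 - z) ^ 3) *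
            ∏ i : Fin q, P i (β i)
          + ∑ j : Fin q, z ^ r * (1 - z) * G j *
              (((β j : ℕ) : ℝ) * ∏ i : Fin q, P i (β i)) := by
    intro β
    rw [hpt β, hbr β, mul_add]
    congr 1
    · ring
    · rw [Finset.mul_sum]
      exact Finset.sum_congr rfl fun j _ => by ring
  rw [Finset.sum_congr rfl fun β _ => hexp β, Finset.sum_add_distrib]
  rw [← Finset.mul_sum, hsum1, mul_one, Finset.sum_comm]
  congr 1
  · rw [Hf, ← hz]
    field_simp
  · refine Finset.sum_congr rfl fun j _ => ?_
    rw [← Finset.mul_sum, hsum2 j, Hf]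
    have h1z : (1 : ℝ) - zf b m n (w - ((j : ℕ) : ℤ) - 1) ≠ 0 := by
      have := zf_lt_one hb hm hn (w - ((j : ℕ) : ℤ) - 1)
      linarith
    simp only [hG, hZ]
    field_simp

/-- The shift/telescoping identity for the prefactor. -/
lemma zf_shift {b m n : ℝ} (hb : 1 < b) (hm : 0 < m) (hn : 0 < n) (v : ℤ) (s : ℕ) :
    zf b m n (v + (s : ℤ) + 1) ^ (1 / (b - 1)) * (1 - zf b m n (v + (s : ℤ) + 1))
      = zf b m n v ^ ((b : ℝ) ^ (-((s : ℤ) + 1)) / (b - 1))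
        - zf b m n v ^ ((b : ℝ) ^ (-(s : ℤ)) / (b - 1)) := by
  have hb0 : (0 : ℝ) < b := by linarith
  have hbne : b ≠ 0 := ne_of_gt hb0
  have hbs : (b : ℝ) ^ (s : ℤ) ≠ 0 := zpow_ne_zero _ hbne
  have hbv : (b : ℝ) ^ v ≠ 0 := zpow_ne_zero _ hbne
  have hb1 : b - 1 ≠ 0 := by linarith
  have hmne : m ≠ 0 := ne_of_gt hm
  rw [zf, zf]
  rw [← Real.exp_mul, ← Real.exp_mul, ← Real.exp_mul, mul_sub, mul_one,
    ← Real.exp_add]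
  have e1 : -(n * (b - 1)) / (m * b ^ (v + (s : ℤ) + 1)) * (1 / (b - 1))
      = -(n * (b - 1)) / (m * b ^ v) * (b ^ (-((s : ℤ) + 1)) / (b - 1)) := by
    rw [zpow_add₀ hbne, zpow_add₀ hbne, zpow_neg, zpow_add₀ hbne, zpow_one]
    field_simp
  have e2 : -(n * (b - 1)) / (m * b ^ v) * (b ^ (-((s : ℤ) + 1)) / (b - 1))
        + -(n * (b - 1)) / (m * b ^ (v + (s : ℤ) + 1))
      = -(n * (b - 1)) / (m * b ^ v) * (b ^ (-(s : ℤ)) / (b - 1)) := by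
    rw [zpow_add₀ hbne, zpow_add₀ hbne, zpow_neg, zpow_neg, zpow_add₀ hbne, zpow_one]
    field_simp
    ring
  rw [e1, e2]

/-- the third-derivative sum identity used in the first-order ML bias. -/
theorem third_derivative_sum_identity (b m n t : ℝ) (hb : 1 < b) (hm : 0 < m) (hn : 0 < n)
    (q : ℕ) (ht : t = b ^ (-(q : ℤ)) / (b - 1))
    (hL : Summable fun w : ℤ =>
      ∑ β : Fin q → Fin 2, |ptilde b m n q w β * thirdBracket b m n q w β|)
    (hR : Summable fun w : ℤ =>
      |zf b m n w ^ (1 + t) * (1 + zf b m n w) * Real.log (zf b m n w) ^ 3 /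
        (1 - zf b m n w) ^ 2|) :
    (∑' w : ℤ, ∑ β : Fin q → Fin 2, ptilde b m n q w β * thirdBracket b m n q w β)
      = ∑' w : ℤ, zf b m n w ^ (1 + t) * (1 + zf b m n w) * Real.log (zf b m n w) ^ 3 /
          (1 - zf b m n w) ^ 2 := by
  classical
  have hb0 : (0 : ℝ) < b := by linarith
  have hb1 : (0 : ℝ) < b - 1 := by linarith
  -- the exponent family
  set aF : ℕ → ℝ := fun i => (b : ℝ) ^ (-(i : ℤ)) / (b - 1) with haF
  have htq : t = aF q := ht
  have haF_ge : ∀ i : ℕ, i ≤ q → t ≤ aF i := by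
    intro i hi
    rw [htq, haF]
    exact (div_le_div_iff_of_pos_right hb1).mpr (zpow_le_zpow_right₀ (le_of_lt hb) (by omega))
  -- RHS term equals zf^t * Hf
  have hRterm : ∀ w : ℤ,
      zf b m n w ^ (1 + t) * (1 + zf b m n w) * Real.log (zf b m n w) ^ 3 /
          (1 - zf b m n w) ^ 2
        = zf b m n w ^ t * Hf b m n w := by
    intro w
    rw [Hf]
    rw [Real.rpow_add (zf_pos b m n w), Real.rpow_one]
    ring
  -- summability of zf^a * Hf for t ≤ a
  have hSa : ∀ a : ℝ, t ≤ a → Summable (fun w : ℤ => zf b m n w ^ a * Hf b m n w) := by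
    intro a ha
    apply Summable.of_abs
    apply Summable.of_nonneg_of_le (fun w => abs_nonneg _) _ hR
    intro w
    rw [hRterm w, abs_mul, abs_mul]
    apply mul_le_mul_of_nonneg_right _ (abs_nonneg _)
    rw [abs_of_pos (Real.rpow_pos_of_pos (zf_pos b m n w) _),
      abs_of_pos (Real.rpow_pos_of_pos (zf_pos b m n w) _)]
    exact Real.rpow_le_rpow_of_exponent_ge (zf_pos b m n w)
      (le_of_lt (zf_lt_one hb hm hn w)) ha
  set T : ℝ → ℝ := fun a => ∑' w : ℤ, zf b m n w ^ a * Hf b m n w with hT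
  -- the shifted j-terms
  have haF0 : aF 0 = 1 / (b - 1) := by simp [haF]
  have hFj : ∀ j : ℕ, j < q → (Summable (fun w : ℤ =>
        zf b m n w ^ (1 / (b - 1)) * (1 - zf b m n w) * Hf b m n (w - (j : ℤ) - 1))
      ∧ (∑' w : ℤ, zf b m n w ^ (1 / (b - 1)) * (1 - zf b m n w) *
          Hf b m n (w - (j : ℤ) - 1)) = T (aF (j + 1)) - T (aF j)) := by
    intro j hj
    set f : ℤ → ℝ := fun w =>
      zf b m n w ^ (1 / (b - 1)) * (1 - zf b m n w) * Hf b m n (w - (j : ℤ) - 1) with hf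
    have hcomp : ∀ v : ℤ, f (v + ((j : ℤ) + 1))
        = zf b m n v ^ aF (j + 1) * Hf b m n v - zf b m n v ^ aF j * Hf b m n v := by
      intro v
      have harg : v + ((j : ℤ) + 1) - (j : ℤ) - 1 = v := by ring
      rw [hf]
      simp only [harg]
      have := zf_shift hb hm hn v j
      have harg2 : v + (j : ℤ) + 1 = v + ((j : ℤ) + 1) := by ring
      rw [harg2] at this
      rw [this]
      have hcast : (-(((j : ℕ) + 1 : ℕ) : ℤ)) = -((j : ℤ) + 1) := by push_cast; ring
      rw [haF]
      push_cast
      ring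
    have hsub : Summable (fun v : ℤ =>
        zf b m n v ^ aF (j + 1) * Hf b m n v - zf b m n v ^ aF j * Hf b m n v) :=
      (hSa _ (haF_ge (j + 1) (by omega))).sub (hSa _ (haF_ge j (by omega)))
    have hse : Summable (fun v : ℤ => f ((Equiv.addRight ((j : ℤ) + 1)) v)) := by
      simpa only [Equiv.coe_addRight, hcomp] using hsub
    have hsf : Summable f := (Equiv.addRight ((j : ℤ) + 1)).summable_iff.mp hse
    constructor
    · exact hsf
    · rw [← (Equiv.addRight ((j : ℤ) + 1)).tsum_eq f]
      simp only [Equiv.coe_addRight]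
      rw [tsum_congr hcomp]
      exact Summable.tsum_sub (hSa _ (haF_ge (j + 1) (by omega))) (hSa _ (haF_ge j (by omega)))
  -- rewrite LHS via beta_sum
  rw [tsum_congr (fun w => beta_sum hb hm hn q w)]
  have hS0 : Summable (fun w : ℤ => zf b m n w ^ (1 / (b - 1)) * Hf b m n w) := by
    have := hSa (aF 0) (haF_ge 0 (Nat.zero_le q))
    rwa [haF0] at this
  have hSj : ∀ j : Fin q, Summable (fun w : ℤ =>
      zf b m n w ^ (1 / (b - 1)) * (1 - zf b m n w) *
        Hf b m n (w - ((j : ℕ) : ℤ) - 1)) := fun j => (hFj j j.isLt).1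
  rw [Summable.tsum_add hS0 (summable_sum (fun j _ => hSj j))]
  rw [Summable.tsum_finsetSum (fun j _ => hSj j)]
  have hstep : ∀ j : Fin q,
      (∑' w : ℤ, zf b m n w ^ (1 / (b - 1)) * (1 - zf b m n w) *
        Hf b m n (w - ((j : ℕ) : ℤ) - 1)) = T (aF ((j : ℕ) + 1)) - T (aF (j : ℕ)) :=
    fun j => (hFj j j.isLt).2
  rw [Finset.sum_congr rfl (fun j _ => hstep j)]
  have htel : ∑ j : Fin q, (T (aF ((j : ℕ) + 1)) - T (aF (j : ℕ)))
      = T (aF q) - T (aF 0) := by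
    rw [Fin.sum_univ_eq_sum_range (fun i => T (aF (i + 1)) - T (aF i))]
    exact Finset.sum_range_sub (fun i => T (aF i)) q
  rw [htel]
  have hT0 : (∑' w : ℤ, zf b m n w ^ (1 / (b - 1)) * Hf b m n w) = T (aF 0) := by
    rw [hT, haF0]
  rw [hT0]
  rw [tsum_congr hRterm, htq]
  ring
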